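/- Hadwiger's characterization of the Euler characteristic: for a finite abstract simplicial complex X, the Euler characteristic χ is the unique function from subcomplexes of X to ℝ such that (1) χ(∅) = 0 and χ(A∪B) = χ(A) + χ(B) − χ(A∩B) for all subcomplexes A, B, and (2) χ(x̄) = 1 for every simplex x̄ of X. -/
import Mathlib


/-- An abstract simplicial complex on vertex set `V`: a finite collection of
nonempty finite sets closed under nonempty subsets. -/
def IsComplex {V : Type*} [DecidableEq V] (X : Finset (Finset V)) : Prop :=
  (∀ a ∈ X, a.Nonempty) ∧ ∀ a ∈ X, ∀ b ⊆ a, b.Nonempty → b ∈ X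

/-- `A` is a subcomplex of `X`. -/
def IsSubcomplex {V : Type*} [DecidableEq V] (X A : Finset (Finset V)) : Prop :=
  A ⊆ X ∧ IsComplex A

/-- The simplex generated by a face `x`: all nonempty subsets of `x`. -/
def simplexOf {V : Type*} [DecidableEq V] (x : Finset V) : Finset (Finset V) :=
  x.powerset.erase ∅

/-- The boundary complex of the simplex on `x`: all proper nonempty subsets of `x`. -/
def boundaryOf {V : Type*} [DecidableEq V] (x : Finset V) : Finset (Finset V) :=
  (x.powerset.erase ∅).erase x

noncomputable def chiAux {V : Type*} [DecidableEq V] (N : ℕ) (A : Finset (Finset V)) : ℝ :=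
  ∑ q ∈ Finset.range N, (-1 : ℝ) ^ q * ((A.filter (fun ρ => ρ.card = q + 1)).card : ℝ)

lemma mem_simplexOf {V : Type*} [DecidableEq V] {x y : Finset V} :
    y ∈ simplexOf x ↔ y ⊆ x ∧ y.Nonempty := by
  simp [simplexOf, Finset.nonempty_iff_ne_empty, and_comm]

lemma chiAux_empty {V : Type*} [DecidableEq V] (N : ℕ) : chiAux N (∅ : Finset (Finset V)) = 0 := by
  simp [chiAux]

lemma chiAux_val {V : Type*} [DecidableEq V] (N : ℕ) (A B : Finset (Finset V)) :
    chiAux N (A ∪ B) = chiAux N A + chiAux N B - chiAux N (A ∩ B) := by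
  unfold chiAux
  rw [eq_sub_iff_add_eq, ← Finset.sum_add_distrib, ← Finset.sum_add_distrib]
  refine Finset.sum_congr rfl fun q _ => ?_
  rw [← mul_add, ← mul_add, Finset.filter_union, Finset.filter_inter_distrib]
  congr 1
  rw [← Nat.cast_add, ← Nat.cast_add, Finset.card_union_add_card_inter]

lemma alt_choose_sum {N n : ℕ} (hn : 1 ≤ n) (hN : n ≤ N) :
    ∑ q ∈ Finset.range N, (-1 : ℝ) ^ q * (n.choose (q + 1) : ℝ) = 1 := by
  have hT : ∑ k ∈ Finset.range (N + 1), (-1 : ℝ) ^ k * (n.choose k : ℝ) = 0 := by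
    rw [← Finset.sum_subset (Finset.range_subset_range.2 (by omega) :
        Finset.range (n + 1) ⊆ Finset.range (N + 1))]
    · have := Int.alternating_sum_range_choose (n := n)
      rw [if_neg (by omega)] at this
      have := congrArg (fun z : ℤ => (z : ℝ)) this
      push_cast at this
      simpa using this
    · intro k _ hk
      rw [Nat.choose_eq_zero_of_lt (by simp at hk; omega)]
      simp
  rw [Finset.sum_range_succ'] at hT
  simp only [pow_succ, pow_zero, Nat.choose_zero_right, Nat.cast_one, one_mul] at hT
  have : ∑ q ∈ Finset.range N, (-1:ℝ)^q * (n.choose (q+1) : ℝ) =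
      - ∑ q ∈ Finset.range N, (-1:ℝ)^q * (-1:ℝ) * (n.choose (q+1) : ℝ) := by
    rw [← Finset.sum_neg_distrib]
    refine Finset.sum_congr rfl fun q _ => by ring
  rw [this]
  linarith [hT]

lemma chiAux_simplex {V : Type*} [DecidableEq V] {N : ℕ} {x : Finset V}
    (hx : x.Nonempty) (hN : x.card ≤ N) : chiAux N (simplexOf x) = 1 := by
  have hfilter : ∀ q : ℕ, (simplexOf x).filter (fun ρ => ρ.card = q + 1) =
      x.powersetCard (q + 1) := by
    intro q
    ext y
    simp only [Finset.mem_filter, mem_simplexOf, Finset.mem_powersetCard,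
      Finset.nonempty_iff_ne_empty]
    constructor
    · rintro ⟨⟨h1, _⟩, h3⟩; exact ⟨h1, h3⟩
    · rintro ⟨h1, h2⟩
      refine ⟨⟨h1, ?_⟩, h2⟩
      intro h; subst h; simp at h2
  unfold chiAux
  calc ∑ q ∈ Finset.range N, (-1:ℝ)^q * (((simplexOf x).filter (fun ρ => ρ.card = q+1)).card : ℝ)
      = ∑ q ∈ Finset.range N, (-1:ℝ)^q * (x.card.choose (q+1) : ℝ) := by
        refine Finset.sum_congr rfl fun q _ => by rw [hfilter q, Finset.card_powersetCard]
    _ = 1 := alt_choose_sum (Finset.one_le_card.2 hx) hN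

lemma chiAux_eq {V : Type*} [DecidableEq V] (X : Finset (Finset V)) (hX : IsComplex X)
    (χ' : Finset (Finset V) → ℝ) (h0 : χ' ∅ = 0)
    (hval : ∀ A B, IsSubcomplex X A → IsSubcomplex X B →
      χ' (A ∪ B) = χ' A + χ' B - χ' (A ∩ B))
    (hsimp : ∀ x ∈ X, χ' (simplexOf x) = 1) :
    ∀ A, IsSubcomplex X A → χ' A = chiAux (X.sup Finset.card) A := by
  intro A
  induction A using Finset.strongInduction with
  | _ A ih =>
    intro hA
    rcases A.eq_empty_or_nonempty with rfl | hAne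
    · rw [h0, chiAux_empty]
    · obtain ⟨x, hxA, hxmax⟩ := Finset.exists_max_image A Finset.card hAne
      have hxX : x ∈ X := hA.1 hxA
      have hxne : x.Nonempty := hX.1 x hxX
      have hsub : simplexOf x ⊆ A := by
        intro y hy; rw [mem_simplexOf] at hy
        exact hA.2.2 x hxA y hy.1 hy.2
      have hAdec : (A.erase x) ∪ simplexOf x = A := by
        apply Finset.Subset.antisymm
        · exact Finset.union_subset (Finset.erase_subset _ _) hsub
        · intro a ha
          by_cases h : a = x
          · subst h
            exact Finset.mem_union_right _ (mem_simplexOf.2 ⟨Finset.Subset.refl _, hxne⟩)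
          · exact Finset.mem_union_left _ (Finset.mem_erase.2 ⟨h, ha⟩)
      have hbd : boundaryOf x = (simplexOf x).erase x := rfl
      have hint : (A.erase x) ∩ simplexOf x = boundaryOf x := by
        rw [hbd]; ext y
        simp only [Finset.mem_inter, Finset.mem_erase]
        constructor
        · rintro ⟨⟨hne, _⟩, hy⟩; exact ⟨hne, hy⟩
        · rintro ⟨hne, hy⟩; exact ⟨⟨hne, hsub hy⟩, hy⟩
      have hErase : IsSubcomplex X (A.erase x) := by
        refine ⟨(Finset.erase_subset _ _).trans hA.1,
          fun a ha => hA.2.1 a (Finset.mem_of_mem_erase ha), fun a ha b hb hbne => ?_⟩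
        have haA := Finset.mem_of_mem_erase ha
        refine Finset.mem_erase.2 ⟨?_, hA.2.2 a haA b hb hbne⟩
        rintro rfl
        have hlt : b.card < a.card :=
          Finset.card_lt_card (lt_of_le_of_ne hb (Finset.ne_of_mem_erase ha).symm)
        exact absurd (hxmax a haA) (by omega)
      have hSimp : IsSubcomplex X (simplexOf x) := by
        refine ⟨fun y hy => ?_, fun a ha => (mem_simplexOf.1 ha).2, fun a ha b hb hbne => ?_⟩
        · rw [mem_simplexOf] at hy; exact hX.2 x hxX y hy.1 hy.2
        · rw [mem_simplexOf] at ha ⊢; exact ⟨hb.trans ha.1, hbne⟩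
      have hBd : IsSubcomplex X (boundaryOf x) := by
        rw [hbd]
        refine ⟨(Finset.erase_subset _ _).trans hSimp.1,
          fun a ha => (mem_simplexOf.1 (Finset.mem_of_mem_erase ha)).2,
          fun a ha b hb hbne => ?_⟩
        have ha' := mem_simplexOf.1 (Finset.mem_of_mem_erase ha)
        refine Finset.mem_erase.2 ⟨?_, mem_simplexOf.2 ⟨hb.trans ha'.1, hbne⟩⟩
        rintro rfl
        have : a.card < b.card :=
          Finset.card_lt_card (lt_of_le_of_ne ha'.1 (Finset.ne_of_mem_erase ha))
        have := Finset.card_le_card hb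
        omega
      have hss1 : A.erase x ⊂ A := Finset.erase_ssubset hxA
      have hss2 : boundaryOf x ⊂ A := by
        rw [hbd]
        exact lt_of_le_of_lt (Finset.erase_subset_erase x hsub) hss1
      have e1 := hval (A.erase x) (simplexOf x) hErase hSimp
      rw [hAdec, hint] at e1
      have e2 := chiAux_val (X.sup Finset.card) (A.erase x) (simplexOf x)
      rw [hAdec, hint] at e2
      rw [e1, e2, ih _ hss1 hErase, ih _ hss2 hBd, hsimp x hxX,
        chiAux_simplex hxne (Finset.le_sup hxX)]

/-- Hadwiger's characterization: the combinatorial Euler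
characteristic `χ(A) = ∑_q (−1)^q f_q(A)` is the unique real-valued function on
subcomplexes of `X` satisfying the valuation axiom and taking value `1` on every
simplex. -/
theorem stmt7 {V : Type*} [DecidableEq V] (X : Finset (Finset V)) (hX : IsComplex X) :
    -- χ satisfies the two axioms
    ((∑ q ∈ Finset.range (X.sup Finset.card),
        (-1 : ℝ) ^ q * (((∅ : Finset (Finset V)).filter (fun ρ => ρ.card = q + 1)).card : ℝ)) = 0 ∧
     (∀ A B, IsSubcomplex X A → IsSubcomplex X B →
        (∑ q ∈ Finset.range (X.sup Finset.card),
          (-1 : ℝ) ^ q * (((A ∪ B).filter (fun ρ => ρ.card = q + 1)).card : ℝ))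
        = (∑ q ∈ Finset.range (X.sup Finset.card),
            (-1 : ℝ) ^ q * ((A.filter (fun ρ => ρ.card = q + 1)).card : ℝ))
          + (∑ q ∈ Finset.range (X.sup Finset.card),
              (-1 : ℝ) ^ q * ((B.filter (fun ρ => ρ.card = q + 1)).card : ℝ))
          - ∑ q ∈ Finset.range (X.sup Finset.card),
              (-1 : ℝ) ^ q * (((A ∩ B).filter (fun ρ => ρ.card = q + 1)).card : ℝ)) ∧
     (∀ x ∈ X, (∑ q ∈ Finset.range (X.sup Finset.card),
        (-1 : ℝ) ^ q * (((simplexOf x).filter (fun ρ => ρ.card = q + 1)).card : ℝ)) = 1)) ∧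
    -- uniqueness
    (∀ χ' : Finset (Finset V) → ℝ, χ' ∅ = 0 →
      (∀ A B, IsSubcomplex X A → IsSubcomplex X B →
        χ' (A ∪ B) = χ' A + χ' B - χ' (A ∩ B)) →
      (∀ x ∈ X, χ' (simplexOf x) = 1) →
      ∀ A, IsSubcomplex X A →
        χ' A = ∑ q ∈ Finset.range (X.sup Finset.card),
          (-1 : ℝ) ^ q * ((A.filter (fun ρ => ρ.card = q + 1)).card : ℝ)) := by
  refine ⟨⟨chiAux_empty _, fun A B _ _ => chiAux_val _ A B,
    fun x hx => chiAux_simplex (hX.1 x hx) (Finset.le_sup hx)⟩,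
    fun χ' h0 hval hsimp A hA => chiAux_eq X hX χ' h0 hval hsimp A hA⟩
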